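/- Let d ≥ 1 and s ≥ 1 be integers and suppose there exists an integer j with 0 ≤ j ≤ s−1 such that 2^{j−s} = 3/(4√d). Then every constant vector v = (r, r, …, r) ∈ ℝ^d with r ≠ 0 satisfies, for the nonuniform quantization with the NUQSGD levels L̂, E[‖Q_s(v) − v‖²] = ‖v‖²/8. -/

import Mathlib

/-!
Coordinates are rounded independently, and rounding `r ∈ [a, b]` (adjacent levels) up to `b`
with probability `(r - a)/(b - a)` has mean square error `(b - r)(r - a)`; hence
`E‖Q_s(v) - v‖² = ‖v‖² ∑ᵢ (bᵢ - rᵢ)(rᵢ - aᵢ)`. For a constant vector every `rᵢ = 1/√d`, which the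
hypothesis places at `4x/3` between the consecutive levels `x = 2^{j-s}` and `2x`, so each
coordinate contributes `(2x/3)(x/3) = 2x²/9 = 1/(8d)`.
-/
open MeasureTheory Real

noncomputable section

/-- The index of the quantization bin containing the normalized coordinate `r`. -/
def levIdx (l : ℕ → ℝ) (s : ℕ) (r : ℝ) : ℕ := sSup {j | j ≤ s ∧ l j ≤ r}

/-- The probability of rounding the normalized coordinate `r` up to the next level. -/
def quantP (l : ℕ → ℝ) (s : ℕ) (r : ℝ) : ℝ :=
  (r - l (levIdx l s r)) / (l (levIdx l s r + 1) - l (levIdx l s r))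

/-- The (random) nonuniform quantization of `v`, driven by the uniform noise vector `u`:
coordinate `i` is `‖v‖ · sign vᵢ · hᵢ`, where `hᵢ` is the upper adjacent level with
probability `p(rᵢ)` and the lower adjacent level otherwise. -/
def quant (l : ℕ → ℝ) (s : ℕ) {d : ℕ} (v : EuclideanSpace ℝ (Fin d))
    (u : Fin d → ℝ) : EuclideanSpace ℝ (Fin d) :=
  WithLp.toLp 2 fun i =>
    ‖v‖ * Real.sign (v i) *
      (if u i ≤ quantP l s (|v i| / ‖v‖)
       then l (levIdx l s (|v i| / ‖v‖) + 1)
       else l (levIdx l s (|v i| / ‖v‖)))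

/-- The uniform probability measure on the cube `[0,1]^d`, driving the quantization noise. -/
def unifCube (d : ℕ) : Measure (Fin d → ℝ) :=
  Measure.pi fun _ => volume.restrict (Set.Icc (0:ℝ) 1)

/-- `l` is a valid sequence of quantization levels `l 0 = 0 < l 1 < ⋯ < l (s+1) = 1`. -/
def IsLevels (l : ℕ → ℝ) (s : ℕ) : Prop :=
  l 0 = 0 ∧ l (s+1) = 1 ∧ ∀ j ≤ s, l j < l (j+1)

/-- The exponentially spaced NUQSGD levels `(0, 2^{-s}, 2^{1-s}, …, 2^{-1}, 1)`:
`l 0 = 0` and `l j = 2^{j-1-s}` for `j = 1, …, s+1`. -/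
def nuqLevels (s : ℕ) : ℕ → ℝ :=
  fun j => if j = 0 then 0 else 2 ^ ((j : ℤ) - 1 - (s : ℤ))

namespace IsLevels

variable {l : ℕ → ℝ} {s : ℕ}

lemma strictMonoOn (hl : IsLevels l s) : StrictMonoOn l (Set.Iic (s + 1)) :=
  strictMonoOn_Iic_of_lt_succ fun m hm => hl.2.2 m (Order.lt_succ_iff.1 hm)

lemma nonneg (hl : IsLevels l s) {k : ℕ} (hk : k ≤ s + 1) : 0 ≤ l k :=
  hl.1 ▸ hl.strictMonoOn.monotoneOn (by simp) (by simpa using hk) (Nat.zero_le k)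

lemma levIdx_spec (hl : IsLevels l s) {r : ℝ} (h0 : 0 ≤ r) (h1 : r ≤ 1) :
    levIdx l s r ≤ s ∧ l (levIdx l s r) ≤ r ∧ r ≤ l (levIdx l s r + 1) := by
  have hbdd : BddAbove {j | j ≤ s ∧ l j ≤ r} := ⟨s, fun j hj => hj.1⟩
  have hmem : levIdx l s r ∈ {j | j ≤ s ∧ l j ≤ r} :=
    Nat.sSup_mem ⟨0, Nat.zero_le s, hl.1 ▸ h0⟩ hbdd
  refine ⟨hmem.1, hmem.2, ?_⟩
  rcases hmem.1.lt_or_eq with hlt | heq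
  · by_contra! hnext
    have : levIdx l s r + 1 ≤ levIdx l s r := le_csSup hbdd ⟨hlt, hnext.le⟩
    omega
  · rw [heq, hl.2.1]
    exact h1

lemma levIdx_eq (hl : IsLevels l s) {r : ℝ} {k : ℕ} (hk : k ≤ s) (hlo : l k ≤ r)
    (hhi : r < l (k + 1)) : levIdx l s r = k := by
  refine IsGreatest.csSup_eq ⟨⟨hk, hlo⟩, fun m ⟨hm, hmr⟩ => ?_⟩
  by_contra! hkm
  have hle : l (k + 1) ≤ l m :=
    hl.strictMonoOn.monotoneOn (by simp; omega) (by simp; omega) hkm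
  exact (hhi.trans_le hle).not_ge hmr

end IsLevels

lemma nuqLevels_succ (s k : ℕ) : nuqLevels s (k + 1) = 2 ^ ((k : ℤ) - s) := by
  simp only [nuqLevels, Nat.add_one_ne_zero, if_false]
  congr 1
  push_cast
  ring

lemma nuqLevels_succ_succ (s k : ℕ) : nuqLevels s (k + 2) = 2 * nuqLevels s (k + 1) := by
  rw [nuqLevels_succ, nuqLevels_succ, ← zpow_one_add₀ two_ne_zero]
  congr 1
  push_cast
  ring

lemma strictMono_nuqLevels (s : ℕ) : StrictMono (nuqLevels s) := by
  refine strictMono_nat_of_lt_succ fun k => ?_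
  cases k with
  | zero => simp [nuqLevels]
  | succ k =>
    have hpos : 0 < nuqLevels s (k + 1) := by rw [nuqLevels_succ]; positivity
    rw [nuqLevels_succ_succ]
    linarith

lemma isLevels_nuqLevels (s : ℕ) : IsLevels (nuqLevels s) s :=
  ⟨if_pos rfl, by rw [nuqLevels_succ]; simp, fun j _ => strictMono_nuqLevels s j.lt_succ_self⟩

lemma integrable_ite_le {μ : Measure ℝ} [IsFiniteMeasure μ] (p a b : ℝ) :
    Integrable (fun t : ℝ => if t ≤ p then a else b) μ :=
  (Integrable.piecewise (measurableSet_Iic (a := p)) (integrable_const a).integrableOn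
    (integrable_const b).integrableOn).congr
      (Filter.Eventually.of_forall fun t => by simp [Set.piecewise, Set.mem_Iic])

lemma setIntegral_Icc_ite_le {p : ℝ} (hp0 : 0 ≤ p) (hp1 : p ≤ 1) (a b : ℝ) :
    ∫ t in Set.Icc (0:ℝ) 1, (if t ≤ p then a else b) = p * a + (1 - p) * b := by
  have hint : IntegrableOn (fun t : ℝ => if t ≤ p then a else b) (Set.Icc 0 1) :=
    integrable_ite_le p a b
  rw [← Set.Icc_union_Ioc_eq_Icc hp0 hp1, setIntegral_union
      ((Set.Iic_disjoint_Ioc le_rfl).mono_left Set.Icc_subset_Iic_self) measurableSet_Ioc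
      (hint.mono_set (Set.Icc_subset_Icc_right hp1)) (hint.mono_set (Set.Ioc_subset_Icc_self.trans
        (Set.Icc_subset_Icc_left hp0))),
    setIntegral_congr_fun measurableSet_Icc (g := fun _ => a) fun t ht => if_pos ht.2,
    setIntegral_congr_fun measurableSet_Ioc (g := fun _ => b) fun t ht => if_neg (not_le.2 ht.1),
    setIntegral_const, setIntegral_const, Real.volume_real_Icc_of_le hp0,
    Real.volume_real_Ioc_of_le hp1, smul_eq_mul, smul_eq_mul, sub_zero]

/-- The level `hᵢ` chosen by `quant` for a coordinate with normalized value `r`, as a function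
of its uniform noise `t`. -/
def roundLevel (l : ℕ → ℝ) (s : ℕ) (r t : ℝ) : ℝ :=
  if t ≤ quantP l s r then l (levIdx l s r + 1) else l (levIdx l s r)

def roundingVariance (l : ℕ → ℝ) (s : ℕ) (r : ℝ) : ℝ :=
  (l (levIdx l s r + 1) - r) * (r - l (levIdx l s r))

lemma measurable_roundLevel (l : ℕ → ℝ) (s : ℕ) (r : ℝ) : Measurable (roundLevel l s r) :=
  Measurable.ite measurableSet_Iic measurable_const measurable_const

lemma integrable_roundLevel_sub_sq {μ : Measure ℝ} [IsFiniteMeasure μ] (l : ℕ → ℝ) (s : ℕ)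
    (r : ℝ) : Integrable (fun t => (roundLevel l s r t - r) ^ 2) μ := by
  simp_rw [roundLevel, apply_ite (fun x => (x - r) ^ 2)]
  exact integrable_ite_le _ _ _

lemma Real.sign_mul_abs (x : ℝ) : Real.sign x * |x| = x := by
  rcases lt_trichotomy x 0 with hx | rfl | hx
  · rw [Real.sign_of_neg hx, abs_of_neg hx]; ring
  · simp
  · rw [Real.sign_of_pos hx, abs_of_pos hx, one_mul]

lemma quant_sub_self_apply (l : ℕ → ℝ) (s : ℕ) {d : ℕ} {v : EuclideanSpace ℝ (Fin d)}
    (hv : v ≠ 0) (u : Fin d → ℝ) (i : Fin d) :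
    (quant l s v u - v) i =
      ‖v‖ * Real.sign (v i) * (roundLevel l s (|v i| / ‖v‖) (u i) - |v i| / ‖v‖) := by
  have hnorm : ‖v‖ ≠ 0 := norm_ne_zero_iff.2 hv
  conv_lhs => rw [PiLp.sub_apply, ← Real.sign_mul_abs (v i)]
  simp only [quant, roundLevel, PiLp.toLp_apply]
  field_simp

instance : IsProbabilityMeasure (volume.restrict (Set.Icc (0:ℝ) 1)) :=
  ⟨by simp [Real.volume_Icc]⟩

namespace IsLevels

variable {l : ℕ → ℝ} {s : ℕ}

lemma setIntegral_roundLevel_sub_sq (hl : IsLevels l s) {r : ℝ} (h0 : 0 ≤ r) (h1 : r ≤ 1) :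
    ∫ t in Set.Icc (0:ℝ) 1, (roundLevel l s r t - r) ^ 2 = roundingVariance l s r := by
  obtain ⟨hk, hlo, hhi⟩ := hl.levIdx_spec h0 h1
  have hgap : 0 < l (levIdx l s r + 1) - l (levIdx l s r) := sub_pos.2 (hl.2.2 _ hk)
  have hp0 : 0 ≤ quantP l s r := div_nonneg (sub_nonneg.2 hlo) hgap.le
  have hp1 : quantP l s r ≤ 1 := div_le_one_of_le₀ (by linarith) hgap.le
  simp_rw [roundLevel, apply_ite (fun x => (x - r) ^ 2)]
  rw [setIntegral_Icc_ite_le hp0 hp1, quantP, roundingVariance]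
  field_simp
  ring

variable {d : ℕ} {v : EuclideanSpace ℝ (Fin d)}

lemma integral_quant_sub_self_apply_sq (hl : IsLevels l s) (hv : v ≠ 0) (i : Fin d) :
    ∫ u, (quant l s v u - v) i ^ 2 ∂unifCube d =
      ‖v‖ ^ 2 * roundingVariance l s (|v i| / ‖v‖) := by
  simp_rw [quant_sub_self_apply l s hv, mul_pow]
  set r := |v i| / ‖v‖
  have h0 : 0 ≤ r := by positivity
  have h1 : r ≤ 1 := div_le_one_of_le₀ (PiLp.norm_apply_le v i) (norm_nonneg v)
  rw [integral_const_mul, unifCube,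
    integral_comp_eval (μ := fun _ : Fin d => volume.restrict (Set.Icc (0:ℝ) 1)) (i := i)
      (f := fun t => (roundLevel l s r t - r) ^ 2)
      (((measurable_roundLevel l s r).sub_const r).pow_const 2).aestronglyMeasurable,
    hl.setIntegral_roundLevel_sub_sq h0 h1]
  rcases eq_or_ne (v i) 0 with hvi | hvi
  · obtain ⟨hk, hlo, -⟩ := hl.levIdx_spec h0 h1
    have hr : r = 0 := by simp [r, hvi]
    have hlev : l (levIdx l s r) = 0 := le_antisymm (hr ▸ hlo) (hl.nonneg (by omega))
    rw [roundingVariance, hlev, hr, sub_self, mul_zero, mul_zero, mul_zero]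
  · rcases Real.sign_apply_eq_of_ne_zero _ hvi with h | h <;> rw [h] <;> ring

theorem integral_norm_quant_sub_sq (hl : IsLevels l s) (hv : v ≠ 0) :
    ∫ u, ‖quant l s v u - v‖ ^ 2 ∂unifCube d =
      ‖v‖ ^ 2 * ∑ i, roundingVariance l s (|v i| / ‖v‖) := by
  conv_lhs => enter [2, u]; rw [EuclideanSpace.real_norm_sq_eq]
  rw [integral_finsetSum _ fun i _ => ?_, Finset.mul_sum]
  · exact Finset.sum_congr rfl fun i _ => hl.integral_quant_sub_self_apply_sq hv i
  simp_rw [quant_sub_self_apply l s hv, mul_pow]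
  exact (integrable_comp_eval (μ := fun _ : Fin d => volume.restrict (Set.Icc (0:ℝ) 1)) (i := i)
    (integrable_roundLevel_sub_sq l s _)).const_mul _

end IsLevels

lemma EuclideanSpace.norm_eq_of_forall_apply_eq {ι : Type*} [Fintype ι]
    {v : EuclideanSpace ℝ ι} {c : ℝ} (hv : ∀ i, v i = c) :
    ‖v‖ = √(Fintype.card ι) * |c| := by
  simp [EuclideanSpace.norm_eq, hv, Real.sqrt_mul (Nat.cast_nonneg _), Real.sqrt_sq_eq_abs]

/-- **Theorem 12 (Lower bound in the regime of large `s`)**: with the NUQSGD levels, if there is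
an integer `0 ≤ j ≤ s−1` with `2^{j−s} = 3/(4√d)`, then every nonzero constant vector
`v = (r, …, r)` satisfies `E[‖Q_s(v) − v‖²] = ‖v‖²/8`. -/
theorem nuq_variance_exact_large_s (d s : ℕ) (hd : 1 ≤ d) (hs : 1 ≤ s)
    (hex : ∃ j : ℕ, j ≤ s - 1 ∧ (2:ℝ) ^ ((j:ℤ) - (s:ℤ)) = 3 / (4 * Real.sqrt d))
    (r : ℝ) (hr : r ≠ 0)
    (v : EuclideanSpace ℝ (Fin d)) (hv : ∀ i, v i = r) :
    (∫ u, ‖quant (nuqLevels s) s v u - v‖ ^ 2 ∂(unifCube d)) = ‖v‖ ^ 2 / 8 := by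
  obtain ⟨j, hj, hx⟩ := hex
  set x : ℝ := 2 ^ ((j:ℤ) - s)
  have hx0 : 0 < x := by positivity
  have hsqrt : 0 < √(d : ℝ) := Real.sqrt_pos.2 (by exact_mod_cast hd)
  have hnorm : ‖v‖ = √d * |r| := by simpa using EuclideanSpace.norm_eq_of_forall_apply_eq hv
  have hv0 : v ≠ 0 := norm_ne_zero_iff.1 (by rw [hnorm]; positivity)
  have hcoord : ∀ i, |v i| / ‖v‖ = 4 / 3 * x := fun i => by
    rw [hv, hnorm, hx]
    field_simp
  have hlow : nuqLevels s (j + 1) = x := nuqLevels_succ s j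
  have hup : nuqLevels s (j + 1 + 1) = 2 * x := by rw [nuqLevels_succ_succ, hlow]
  have hlev : levIdx (nuqLevels s) s (4 / 3 * x) = j + 1 :=
    (isLevels_nuqLevels s).levIdx_eq (by omega) (by rw [hlow]; linarith) (by rw [hup]; linarith)
  have hxd : x ^ 2 * d = 9 / 16 := by
    rw [hx, div_pow, mul_pow, Real.sq_sqrt (Nat.cast_nonneg d)]
    field_simp
    norm_num
  rw [(isLevels_nuqLevels s).integral_norm_quant_sub_sq hv0]
  simp only [hcoord, roundingVariance, hlev, hlow, hup, Finset.sum_const, Finset.card_univ,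
    Fintype.card_fin, nsmul_eq_mul]
  linear_combination 2 / 9 * ‖v‖ ^ 2 * hxd
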